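/- arXiv:0910.1958 — 5 statements merged into one kernel-verified Lean document; each statement's English description precedes it below -/
import Mathlib

section
/- Let (X,μ,T) be a conservative ergodic nonsingular dynamical system with T forward measurable, and let d be a μ-compatible metric on X. Suppose that for every δ > 0 there exists x ∈ X with μ(B_{T_δ}(x)) > 0, where B_{T_δ} denotes balls in the metric d_T. Then there is a μ-null set S ⊆ X such that every d_T-ball centered at any point of X \ S has positive μ-measure (i.e., d_T restricted to X \ S is μ-compatible). -/
open MeasureTheory Set Function
open scoped ENNReal

/-!
For `δ > 0` let `A` be a `d_T`-ball of radius `δ / 2` with positive measure. Its forward orbit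
`V = ⋃ n, Tⁿ(A)` is measurable because `T` is forward measurable, and `T(V) ⊆ V`; conservativity
upgrades this to `T⁻¹(V) = V` mod `μ`, so `V` is conull by ergodicity. Since `T` does not increase
`d_T`, the `d_T`-ball of radius `δ` about a point `Tⁿ(a)`, `a ∈ A`, contains `Tⁿ(A)`, which has
positive measure by nonsingularity. Intersecting these conull sets over `δ = 1 / (k + 1)` gives
the complement of `S`.
-/

/-- The metric `d_T(x,y) = min (sup_{n ≥ 0} d(Tⁿx, Tⁿy)) 1`. -/
noncomputable def dT {X : Type*} [PseudoMetricSpace X] (T : X → X) (x y : X) : ℝ :=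
  (min (⨆ n : ℕ, edist (T^[n] x) (T^[n] y)) 1).toReal

theorem min_add_le_min_add_min {M : Type*} [AddCommMonoid M] [LinearOrder M]
    [CanonicallyOrderedAdd M] (a b c : M) : min (a + b) c ≤ min a c + min b c := by
  rcases le_total a c with hac | hca
  · rcases le_total b c with hbc | hcb
    · rw [min_eq_left hac, min_eq_left hbc]
      exact min_le_left _ _
    · rw [min_eq_right hcb]
      exact (min_le_right _ _).trans le_add_self
  · rw [min_eq_right hca]
    exact (min_le_right _ _).trans le_self_add

section DynamicalMetric

variable {X : Type*} [PseudoMetricSpace X] (T : X → X)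

theorem dT_comm (x y : X) : dT T x y = dT T y x := by
  simp only [dT, edist_comm]

theorem dT_triangle (x y z : X) : dT T x z ≤ dT T x y + dT T y z := by
  have hsup : ⨆ n, edist (T^[n] x) (T^[n] z) ≤
      (⨆ n, edist (T^[n] x) (T^[n] y)) + ⨆ n, edist (T^[n] y) (T^[n] z) :=
    iSup_le fun n => (edist_triangle _ _ _).trans (add_le_add (le_iSup_of_le n le_rfl)
      (le_iSup_of_le n le_rfl))
  have hfin : ∀ a : ℝ≥0∞, min a 1 ≠ ⊤ := fun a => ne_top_of_le_ne_top ENNReal.one_ne_top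
    (min_le_right _ _)
  rw [dT, dT, dT, ← ENNReal.toReal_add (hfin _) (hfin _)]
  exact ENNReal.toReal_mono (ENNReal.add_ne_top.2 ⟨hfin _, hfin _⟩)
    ((min_le_min_right 1 hsup).trans (min_add_le_min_add_min _ _ _))

theorem dT_iterate_le (n : ℕ) (x y : X) : dT T (T^[n] x) (T^[n] y) ≤ dT T x y := by
  refine ENNReal.toReal_mono (ne_top_of_le_ne_top ENNReal.one_ne_top (min_le_right _ _))
    (min_le_min_right 1 (iSup_le fun m => ?_))
  rw [← iterate_add_apply, ← iterate_add_apply]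
  exact le_iSup_of_le (m + n) le_rfl

theorem mapsTo_iterate_setOf_dT_lt (n : ℕ) (x : X) (r : ℝ) :
    MapsTo T^[n] {y | dT T x y < r} {y | dT T (T^[n] x) y < r} :=
  fun _ hy => (dT_iterate_le T n x _).trans_lt hy

theorem setOf_dT_lt_half_subset {x a : X} {δ : ℝ} (ha : dT T x a < δ / 2) :
    {y | dT T x y < δ / 2} ⊆ {y | dT T a y < δ} := fun y hy => by
  have := dT_triangle T a x y
  rw [dT_comm T a x] at this
  change dT T x y < δ / 2 at hy
  change dT T a y < δ
  linarith

variable [MeasurableSpace X] [OpensMeasurableSpace X] {T}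

theorem measurable_dT (hT : Measurable T) (x : X) : Measurable (dT T x) :=
  ((Measurable.iSup fun n => (continuous_const.edist continuous_id).measurable.comp
    (hT.iterate n)).min measurable_const).ennreal_toReal

theorem measurableSet_setOf_dT_lt (hT : Measurable T) (x : X) (r : ℝ) :
    MeasurableSet {y | dT T x y < r} :=
  measurableSet_lt (measurable_dT hT x) measurable_const

end DynamicalMetric

section Orbit

variable {α : Type*}

theorem mapsTo_iUnion_iterate_image (f : α → α) (s : Set α) :
    MapsTo f (⋃ n, f^[n] '' s) (⋃ n, f^[n] '' s) := fun _ hx => by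
  obtain ⟨n, y, hy, rfl⟩ := mem_iUnion.1 hx
  exact mem_iUnion.2 ⟨n + 1, y, hy, iterate_succ_apply' f n y⟩

variable [MeasurableSpace α] {f : α → α}

theorem measurableSet_iterate_image (hf : ∀ s, MeasurableSet s → MeasurableSet (f '' s))
    {s : Set α} (hs : MeasurableSet s) (n : ℕ) : MeasurableSet (f^[n] '' s) := by
  induction n with
  | zero => simpa using hs
  | succ n ih => rw [iterate_succ', image_comp]; exact hf _ ih

theorem MeasureTheory.Measure.QuasiMeasurePreserving.measure_image_ne_zero {β : Type*}
    [MeasurableSpace β] {g : α → β} {μa : Measure α} {μb : Measure β}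
    (hg : QuasiMeasurePreserving g μa μb) {s : Set α} (hs : μa s ≠ 0) : μb (g '' s) ≠ 0 :=
  fun h => hs (measure_mono_null (subset_preimage_image g s) (hg.preimage_null h))

/-- A point of `f⁻¹(s) \ s` never returns to this set, so conservativity makes it null. -/
theorem MeasureTheory.Conservative.preimage_ae_eq_of_mapsTo {μ : Measure α} {s : Set α}
    (hf : Conservative f μ) (hs : MeasurableSet s) (hmaps : MapsTo f s s) :
    f ⁻¹' s =ᵐ[μ] s := by
  refine ae_eq_set.2 ⟨?_, by rw [sdiff_eq_empty.2 (show s ⊆ f ⁻¹' s from hmaps), measure_empty]⟩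
  by_contra h
  obtain ⟨x, ⟨hfx, -⟩, m, hm, -, hmx⟩ :=
    hf.exists_mem_iterate_mem ((hs.preimage hf.measurable).diff hs).nullMeasurableSet h
  obtain ⟨k, rfl⟩ := Nat.exists_eq_succ_of_ne_zero hm
  rw [iterate_succ_apply] at hmx
  exact hmx (hmaps.iterate k hfx)

end Orbit

theorem exists_conull_forall_measure_setOf_dT_lt_ne_zero {X : Type*} [PseudoMetricSpace X]
    [MeasurableSpace X] [OpensMeasurableSpace X] {μ : Measure X} {T : X → X}
    (hC : Conservative T μ)
    (hErg : ∀ A : Set X, MeasurableSet A → T ⁻¹' A =ᵐ[μ] A → μ A = 0 ∨ μ Aᶜ = 0)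
    (hFwd : ∀ A : Set X, MeasurableSet A → MeasurableSet (T '' A))
    {x₀ : X} {δ : ℝ} (hx₀ : μ {y | dT T x₀ y < δ / 2} ≠ 0) :
    ∃ V : Set X, MeasurableSet V ∧ μ Vᶜ = 0 ∧ ∀ x ∈ V, μ {y | dT T x y < δ} ≠ 0 := by
  set A := {y | dT T x₀ y < δ / 2}
  have hA : MeasurableSet A := measurableSet_setOf_dT_lt hC.measurable x₀ _
  set V := ⋃ n, T^[n] '' A
  have hV : MeasurableSet V := .iUnion (measurableSet_iterate_image hFwd hA)
  have hAV : A ⊆ V := subset_iUnion_of_subset 0 (by simp)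
  have hinv : T ⁻¹' V =ᵐ[μ] V :=
    hC.preimage_ae_eq_of_mapsTo hV (mapsTo_iUnion_iterate_image T A)
  refine ⟨V, hV, (hErg V hV hinv).resolve_left fun h => hx₀ (measure_mono_null hAV h), ?_⟩
  intro x hx
  obtain ⟨n, a, ha, rfl⟩ := mem_iUnion.1 hx
  have hball : μ {y | dT T a y < δ} ≠ 0 :=
    fun h => hx₀ (measure_mono_null (setOf_dT_lt_half_subset T ha) h)
  exact fun h => (hC.iterate n).toQuasiMeasurePreserving.measure_image_ne_zero hball
    (measure_mono_null (mapsTo_iterate_setOf_dT_lt T n a δ).image_subset h)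

theorem dT_compatible_off_null_set_general {X : Type*} [MetricSpace X] [MeasurableSpace X]
    [OpensMeasurableSpace X]
    (μ : Measure X) (T : X → X) (hT : Measurable T)
    (hNS : ∀ A : Set X, MeasurableSet A → (μ A = 0 ↔ μ (T ⁻¹' A) = 0))
    (hCons : ∀ A : Set X, MeasurableSet A → 0 < μ A →
      ∃ n : ℕ, 0 < n ∧ 0 < μ (A ∩ T^[n] ⁻¹' A))
    (hErg : ∀ A : Set X, MeasurableSet A → T ⁻¹' A =ᵐ[μ] A → μ A = 0 ∨ μ Aᶜ = 0)
    (hFwd : ∀ A : Set X, MeasurableSet A → MeasurableSet (T '' A))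
    (hpos : ∀ δ : ℝ, 0 < δ → ∃ x : X, 0 < μ {y : X | dT T x y < δ}) :
    ∃ S : Set X, MeasurableSet S ∧ μ S = 0 ∧
      ∀ x ∉ S, ∀ r : ℝ, 0 < r → 0 < μ {y : X | dT T x y < r} := by
  have hq : Measure.QuasiMeasurePreserving T μ μ :=
    ⟨hT, .mk fun A hA h => by rw [Measure.map_apply hT hA]; exact (hNS A hA).1 h⟩
  have hC : Conservative T μ := ⟨hq, fun A hA h => by
    obtain ⟨n, hn, hret⟩ := hCons A hA (pos_iff_ne_zero.2 h)
    obtain ⟨x, hxA, hxn⟩ := nonempty_of_measure_ne_zero hret.ne'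
    exact ⟨x, hxA, n, hn.ne', hxn⟩⟩
  have hgood (k : ℕ) : ∃ V : Set X, MeasurableSet V ∧ μ Vᶜ = 0 ∧
      ∀ x ∈ V, μ {y | dT T x y < 1 / (k + 1)} ≠ 0 := by
    obtain ⟨x₀, hx₀⟩ := hpos (1 / (k + 1) / 2) (by positivity)
    exact exists_conull_forall_measure_setOf_dT_lt_ne_zero hC hErg hFwd hx₀.ne'
  choose V hVm hVc hV using hgood
  refine ⟨(⋂ k, V k)ᶜ, (MeasurableSet.iInter hVm).compl, ?_, fun x hx r hr => ?_⟩
  · rw [compl_iInter]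
    exact measure_iUnion_null hVc
  · rw [notMem_compl_iff, mem_iInter] at hx
    obtain ⟨k, hk⟩ := exists_nat_one_div_lt hr
    exact (pos_iff_ne_zero.2 (hV k x (hx k))).trans_le (measure_mono fun y hy => hy.trans hk)

/-- Let `(X,μ,T)` be a conservative ergodic nonsingular system with `T` forward
measurable and `d` a `μ`-compatible metric. If for every `δ > 0` some `d_T`-ball of
radius `δ` has positive measure, then off a null set `S`, every `d_T`-ball centered
in `X \ S` has positive measure. -/
theorem dT_compatible_off_null_set {X : Type*} [MetricSpace X] [MeasurableSpace X]
    [OpensMeasurableSpace X]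
    (μ : Measure X) [SigmaFinite μ] (T : X → X) (hT : Measurable T)
    (hNS : ∀ A : Set X, MeasurableSet A → (μ A = 0 ↔ μ (T ⁻¹' A) = 0))
    (hCons : ∀ A : Set X, MeasurableSet A → 0 < μ A →
      ∃ n : ℕ, 0 < n ∧ 0 < μ (A ∩ T^[n] ⁻¹' A))
    (hErg : ∀ A : Set X, MeasurableSet A → T ⁻¹' A =ᵐ[μ] A → μ A = 0 ∨ μ Aᶜ = 0)
    (hFwd : ∀ A : Set X, MeasurableSet A → MeasurableSet (T '' A))
    (hcomp : ∀ (x : X) (r : ℝ), 0 < r → 0 < μ (Metric.ball x r))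
    (hpos : ∀ δ : ℝ, 0 < δ → ∃ x : X, 0 < μ {y : X | dT T x y < δ}) :
    ∃ S : Set X, MeasurableSet S ∧ μ S = 0 ∧
      ∀ x ∉ S, ∀ r : ℝ, 0 < r → 0 < μ {y : X | dT T x y < r} :=
  dT_compatible_off_null_set_general μ T hT hNS hCons hErg hFwd hpos
end

section
/- Let (X,μ,T) be an ergodic finite measure-preserving dynamical system and d a μ-compatible metric satisfying d(Tx,Ty) ≤ d(x,y) for all x,y ∈ X. Then T is a d-isometry: d(Tx,Ty) = d(x,y) for all x,y ∈ X. -/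
/-!
If `d(Tx, Ty) < d(x, y)` for some pair, apply Poincaré recurrence to `T × T` (measure preserving,
hence conservative, on `μ × μ`) and the product of two small balls around `x` and `y`, which has
positive measure: some pair `(u, v)` close to `(x, y)` returns close to `(x, y)` after `m ≥ 1`
steps. Since `T` does not expand distances, `d(Tᵐu, Tᵐv) ≤ d(Tu, Tv) ≈ d(Tx, Ty)`, while
`d(Tᵐu, Tᵐv) ≈ d(x, y)`, a contradiction once the balls are small enough.
-/

open MeasureTheory Metric

theorem MeasureTheory.Conservative.exists_mem_prod_iterate_mem {α β : Type*} [MeasurableSpace α]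
    [MeasurableSpace β] {μ : Measure α} {ν : Measure β} [SFinite ν] {f : α → α} {g : β → β}
    (hfg : Conservative (Prod.map f g) (μ.prod ν)) {s : Set α} {t : Set β}
    (hs : MeasurableSet s) (ht : MeasurableSet t) (hμs : μ s ≠ 0) (hνt : ν t ≠ 0) :
    ∃ u ∈ s, ∃ v ∈ t, ∃ m ≠ 0, f^[m] u ∈ s ∧ g^[m] v ∈ t := by
  have hst : μ.prod ν (s ×ˢ t) ≠ 0 := by
    rw [Measure.prod_prod]
    exact mul_ne_zero hμs hνt
  obtain ⟨⟨u, v⟩, ⟨hu, hv⟩, m, hm, hmem⟩ :=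
    hfg.exists_mem_iterate_mem (hs.prod ht).nullMeasurableSet hst
  rw [Prod.map_iterate] at hmem
  exact ⟨u, hu, v, hv, m, hm, hmem⟩

theorem LipschitzWith.dist_lt_dist_apply_add_of_iterate_mem_ball {X : Type*} [PseudoMetricSpace X]
    {f : X → X} (hf : LipschitzWith 1 f) {x y u v : X} {ε : ℝ} {m : ℕ} (hm : m ≠ 0)
    (hu : u ∈ ball x ε) (hv : v ∈ ball y ε)
    (hmu : f^[m] u ∈ ball x ε) (hmv : f^[m] v ∈ ball y ε) :
    dist x y < dist (f x) (f y) + 4 * ε := by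
  obtain ⟨n, rfl⟩ := Nat.exists_eq_succ_of_ne_zero hm
  rw [mem_ball] at hu hv hmu hmv
  have hreturn : dist (f^[n + 1] u) (f^[n + 1] v) ≤ dist (f u) (f v) := by
    simpa [Function.iterate_succ_apply] using (hf.iterate n).dist_le_mul (f u) (f v)
  calc dist x y
      ≤ dist x (f^[n + 1] u) + dist (f^[n + 1] u) (f^[n + 1] v) + dist (f^[n + 1] v) y :=
        dist_triangle4 _ _ _ _
    _ ≤ dist (f u) (f x) + dist (f x) (f y) + dist (f y) (f v) + 2 * ε := by
        linarith [dist_comm x (f^[n + 1] u), dist_triangle4 (f u) (f x) (f y) (f v)]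
    _ ≤ dist u x + dist (f x) (f y) + dist y v + 2 * ε := by
        gcongr <;> simpa using hf.dist_le_mul _ _
    _ < dist (f x) (f y) + 4 * ε := by linarith [dist_comm y v]

/-- For an ergodic finite measure-preserving system with a `μ`-compatible metric
satisfying `d(Tx,Ty) ≤ d(x,y)`, the map `T` is an isometry. -/
theorem one_lipschitz_implies_isometry {X : Type*} [MetricSpace X] [MeasurableSpace X]
    [OpensMeasurableSpace X]
    (μ : Measure X) [IsFiniteMeasure μ] (T : X → X)
    (hErg : Ergodic T μ)
    (hcomp : ∀ (x : X) (r : ℝ), 0 < r → 0 < μ (Metric.ball x r))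
    (hLip : ∀ x y : X, dist (T x) (T y) ≤ dist x y) :
    ∀ x y : X, dist (T x) (T y) = dist x y := by
  intro x y
  have hcons : Conservative (Prod.map T T) (μ.prod μ) :=
    (hErg.toMeasurePreserving.prod hErg.toMeasurePreserving).conservative
  refine (hLip x y).antisymm (le_of_forall_pos_lt_add fun δ hδ => ?_)
  have hε : 0 < δ / 4 := by positivity
  obtain ⟨u, hu, v, hv, m, hm, hmu, hmv⟩ :=
    hcons.exists_mem_prod_iterate_mem measurableSet_ball measurableSet_ball
      (hcomp x _ hε).ne' (hcomp y _ hε).ne'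
  simpa [mul_div_cancel₀] using
    (LipschitzWith.mk_one hLip).dist_lt_dist_apply_add_of_iterate_mem_ball hm hu hv hmu hmv
end

section
/- Let (X,μ,T) be an ergodic finite measure-preserving dynamical system and d a μ-compatible metric such that T is a d-isometry. Then (X,μ,T) is measurably isomorphic to a dynamical system (X₁,μ₁,T₁) where X₁ is a compact metric space, T₁ is an isometry of X₁, and the metric on X₁ is μ₁-compatible. (X₁ may be taken to be the metric completion of (X,d).) -/
/-!
Because `T` is nonexpanding and measure preserving, `x ↦ μ (ball x r)` satisfies
`g ≤ g ∘ T` with equal integrals, so it is `T`-invariant a.e. and, by ergodicity, a.e. equal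
to a constant `c_r`, positive because balls have positive measure. The centres of such balls are
dense, and `r`-balls around `2r`-separated centres are disjoint, so finiteness of `μ` bounds the
number of separated centres: `X` is totally bounded. Its completion is therefore compact, `T`
extends to an isometry of it, and the inclusion of `X`, with the pushed-forward measure, is the
required isomorphism.
-/

open MeasureTheory Metric Set Function
open UniformSpace (Completion)

section MeasureOfBalls

variable {X : Type*} [PseudoMetricSpace X] [MeasurableSpace X]

theorem measure_ball_eq_iSup (μ : Measure X) (x : X) (r : ℝ) :
    μ (ball x r) = ⨆ n : ℕ, μ (ball x (r - 1 / (n + 1))) := by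
  have hmono : Monotone fun n : ℕ => ball x (r - 1 / (n + 1)) := fun m n hmn =>
    ball_subset_ball (by gcongr)
  rw [← hmono.measure_iUnion]
  congr 1
  refine (iUnion_subset fun n => ball_subset_ball (by simp; positivity)).antisymm' fun y hy => ?_
  obtain ⟨n, hn⟩ := exists_nat_one_div_lt (sub_pos.2 (mem_ball.1 hy))
  exact mem_iUnion.2 ⟨n, mem_ball.2 (by linarith)⟩

theorem lowerSemicontinuous_measure_ball (μ : Measure X) (r : ℝ) :
    LowerSemicontinuous fun x => μ (ball x r) := by
  intro x a ha
  change a < μ (ball x r) at ha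
  rw [measure_ball_eq_iSup, lt_iSup_iff] at ha
  obtain ⟨n, hn⟩ := ha
  filter_upwards [ball_mem_nhds x (Nat.one_div_pos_of_nat : (0 : ℝ) < 1 / (n + 1))] with y hy
  exact hn.trans_le (measure_mono (ball_subset_ball' (by rw [dist_comm]; linarith [mem_ball.1 hy])))

theorem isOpenPosMeasure_of_measure_ball_pos {μ : Measure X}
    (h : ∀ (x : X) (r : ℝ), 0 < r → 0 < μ (ball x r)) : μ.IsOpenPosMeasure where
  open_pos U hU := fun ⟨x, hx⟩ => by
    obtain ⟨r, hr, hrU⟩ := isOpen_iff.1 hU x hx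
    exact ((h x r hr).trans_le (measure_mono hrU)).ne'

variable [OpensMeasurableSpace X] {μ : Measure X} [IsFiniteMeasure μ]

theorem finite_of_pairwise_le_dist_of_le_measure_ball {ι : Type*} {f : ι → X} {r : ℝ}
    {c : ENNReal} (hc : c ≠ 0) (hsep : Pairwise fun i j => 2 * r ≤ dist (f i) (f j))
    (hμ : ∀ i, c ≤ μ (ball (f i) r)) : Finite ι := by
  have hdisj : Pairwise (Disjoint on fun i => ball (f i) r) := fun i j hij =>
    ball_disjoint_ball (by linarith [hsep hij] : r + r ≤ dist (f i) (f j))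
  have := Measure.finite_const_le_meas_of_disjoint_iUnion μ (pos_iff_ne_zero.2 hc)
    (fun i => measurableSet_ball) hdisj (measure_ne_top μ _)
  simpa only [hμ, ofPred_true, finite_univ_iff] using this

end MeasureOfBalls

theorem MeasureTheory.MeasurePreserving.ae_eq_comp_of_le_comp {X : Type*} [MeasurableSpace X]
    {μ : Measure X} {T : X → X} (hT : MeasurePreserving T μ μ) {g : X → ENNReal}
    (hg : Measurable g) (hfin : ∫⁻ x, g x ∂μ ≠ ⊤) (hle : ∀ x, g x ≤ g (T x)) :
    g =ᵐ[μ] g ∘ T :=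
  ae_eq_of_ae_le_of_lintegral_le (ae_of_all μ hle) hfin (hg.comp hT.measurable).aemeasurable
    (hT.lintegral_comp hg).le

section ErgodicNonexpanding

variable {X : Type*} [PseudoMetricSpace X] [MeasurableSpace X] [OpensMeasurableSpace X]
  {μ : Measure X} [IsFiniteMeasure μ] [μ.IsOpenPosMeasure]

theorem Ergodic.exists_ae_measure_ball_eq {T : X → X} (hT : Ergodic T μ)
    (hT₁ : LipschitzWith 1 T) {r : ℝ} (hr : 0 < r) : ∃ c ≠ 0, ∀ᵐ x ∂μ, μ (ball x r) = c := by
  set g : X → ENNReal := fun x => μ (ball x r)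
  have hg : Measurable g := (lowerSemicontinuous_measure_ball μ r).measurable
  have hle : ∀ x, g x ≤ g (T x) := fun x => calc
    g x ≤ μ (T ⁻¹' ball (T x) r) :=
      measure_mono (by simpa using (hT₁.mapsTo_ball one_ne_zero x r).subset_preimage)
    _ = g (T x) := hT.measure_preimage measurableSet_ball.nullMeasurableSet
  have hfin : ∫⁻ x, g x ∂μ ≠ ⊤ :=
    ((lintegral_mono fun x => measure_mono (subset_univ _)).trans_lt
      (lintegral_const_lt_top (measure_ne_top μ univ))).ne
  obtain ⟨c, hc⟩ := hT.ae_eq_const_of_ae_eq_comp₀ hg.nullMeasurable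
    (hT.toMeasurePreserving.ae_eq_comp_of_le_comp hg hfin hle).symm
  rcases isEmpty_or_nonempty X with hX | hX
  · exact ⟨1, one_ne_zero, ae_of_all μ isEmptyElim⟩
  obtain ⟨x, hx⟩ := (Measure.dense_of_ae hc).nonempty
  have hx : g x = c := hx
  exact ⟨c, hx ▸ (measure_ball_pos μ x hr).ne', hc⟩

theorem totallyBounded_univ_of_forall_ae_le_measure_ball
    (h : ∀ r > 0, ∃ c ≠ 0, ∀ᵐ x ∂μ, c ≤ μ (ball x r)) : TotallyBounded (univ : Set X) := by
  rw [Metric.totallyBounded_iff]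
  intro ε hε
  obtain ⟨c, hc, hae⟩ := h (ε / 4) (by positivity)
  set heavy : X → Prop := fun x => c ≤ μ (ball x (ε / 4))
  have hdense : Dense {x | heavy x} := Measure.dense_of_ae hae
  by_contra! hnet
  have hstep : ∀ t : Finset X, (∀ x ∈ t, heavy x) → ∃ y, heavy y ∧ ∀ x ∈ t, ε / 2 ≤ dist x y := by
    intro t _
    obtain ⟨z, -, hz⟩ := not_subset.1 (hnet t t.finite_toSet)
    obtain ⟨y, hyz, hy⟩ := Metric.dense_iff.1 hdense z (ε / 4) (by positivity)
    refine ⟨y, hy, fun x hx => ?_⟩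
    have hzx : ε ≤ dist z x := by simpa using fun h => hz (mem_biUnion hx (mem_ball.2 h))
    linarith [dist_triangle z y x, mem_ball.1 hyz, dist_comm y z, dist_comm x y]
  have : Std.Symm fun x y : X => ε / 2 ≤ dist x y := ⟨fun x y h => by rwa [dist_comm]⟩
  obtain ⟨f, hf, hsep⟩ := exists_seq_of_forall_finset_exists' heavy _ hstep
  have := finite_of_pairwise_le_dist_of_le_measure_ball hc
    (fun m n hmn => by linarith [hsep hmn]) hf
  exact not_finite ℕ

end ErgodicNonexpanding

theorem UniformSpace.Completion.compactSpace_of_totallyBounded {α : Type*} [UniformSpace α]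
    (h : TotallyBounded (univ : Set α)) : CompactSpace (Completion α) := by
  refine ⟨isCompact_iff_totallyBounded_isComplete.2 ⟨?_, isComplete_univ⟩⟩
  rw [← (denseRange_coe (α := α)).closure_range, ← image_univ]
  exact (h.image (uniformContinuous_coe α)).closure

theorem Continuous.opensMeasurableSpace_map {α β : Type*} [TopologicalSpace α]
    [m : MeasurableSpace α] [OpensMeasurableSpace α] [TopologicalSpace β] {f : α → β}
    (hf : Continuous f) : @OpensMeasurableSpace β _ (m.map f) :=
  @OpensMeasurableSpace.mk β _ (m.map f) <| by
    borelize β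
    exact measurable_iff_le_map.1 hf.measurable

theorem DenseRange.isOpenPosMeasure_map {α β : Type*} [TopologicalSpace α] [MeasurableSpace α]
    {μ : Measure α} [μ.IsOpenPosMeasure] [TopologicalSpace β] [MeasurableSpace β]
    [OpensMeasurableSpace β] {f : α → β} (hd : DenseRange f) (hfc : Continuous f)
    (hfm : Measurable f) : (μ.map f).IsOpenPosMeasure where
  open_pos U hU hne := by
    obtain ⟨x, hx⟩ := hd.exists_mem_open hU hne
    rw [Measure.map_apply hfm hU.measurableSet]
    exact (hU.preimage hfc).measure_ne_zero μ ⟨x, hx⟩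

/-- An ergodic finite measure-preserving system whose `μ`-compatible metric makes `T`
an isometry is measurably isomorphic to a Kronecker system: a system `(X₁,μ₁,T₁)` where
`X₁` is a compact metric space, `T₁` an isometry of `X₁`, and the metric on `X₁` is
`μ₁`-compatible. -/
theorem isometry_isomorphic_to_kronecker {X : Type} [MetricSpace X] [MeasurableSpace X]
    [OpensMeasurableSpace X]
    (μ : Measure X) [IsFiniteMeasure μ] (T : X → X)
    (hErg : Ergodic T μ)
    (hcomp : ∀ (x : X) (r : ℝ), 0 < r → 0 < μ (Metric.ball x r))
    (hIso : ∀ x y : X, dist (T x) (T y) = dist x y) :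
    ∃ (X₁ : Type) (m₁ : MetricSpace X₁) (s₁ : MeasurableSpace X₁)
      (μ₁ : Measure X₁) (T₁ : X₁ → X₁) (φ : X → X₁) (U : Set X) (V : Set X₁),
      CompactSpace X₁ ∧
      (∀ a b : X₁, dist (T₁ a) (T₁ b) = dist a b) ∧
      (∀ (x₁ : X₁) (r : ℝ), 0 < r → MeasurableSet (Metric.ball x₁ r) ∧
        0 < μ₁ (Metric.ball x₁ r)) ∧
      MeasurableSet U ∧ MeasurableSet V ∧
      μ Uᶜ = 0 ∧ μ₁ Vᶜ = 0 ∧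
      Set.BijOn φ U V ∧ Measurable φ ∧
      (∀ A : Set X₁, MeasurableSet A → μ₁ A = μ (φ ⁻¹' A)) ∧
      (∀ x ∈ U, φ (T x) = T₁ (φ x)) := by
  have hT : Isometry T := Isometry.of_dist_eq hIso
  have : μ.IsOpenPosMeasure := isOpenPosMeasure_of_measure_ball_pos hcomp
  have htb : TotallyBounded (univ : Set X) :=
    totallyBounded_univ_of_forall_ae_le_measure_ball fun r hr =>
      let ⟨c, hc, hae⟩ := hErg.exists_ae_measure_ball_eq hT.lipschitz hr
      ⟨c, hc, hae.mono fun _ hx => hx.ge⟩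
  let ι : X → Completion X := (↑)
  -- The Borel σ-algebra of the completion need not make `range ι` measurable; this one does.
  let s₁ : MeasurableSpace (Completion X) := MeasurableSpace.map ι ‹_›
  have hι : Measurable ι := measurable_iff_le_map.2 le_rfl
  have : OpensMeasurableSpace (Completion X) :=
    (Completion.continuous_coe X).opensMeasurableSpace_map
  have : (μ.map ι).IsOpenPosMeasure :=
    Completion.denseRange_coe.isOpenPosMeasure_map (Completion.continuous_coe X) hι
  have hrange : MeasurableSet (range ι) := by
    change MeasurableSet (ι ⁻¹' range ι)
    simp
  refine ⟨_, inferInstance, s₁, μ.map ι, Completion.map T, ι, univ, range ι,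
    Completion.compactSpace_of_totallyBounded htb, hT.completion_map.dist_eq,
    fun x r hr => ⟨measurableSet_ball, measure_ball_pos _ x hr⟩, .univ, hrange, by simp, ?_,
    by simpa using (Completion.coe_injective X).injOn.bijOn_image (s := univ), hι,
    fun A hA => Measure.map_apply hι hA,
    fun x _ => (Completion.map_coe hT.uniformContinuous x).symm⟩
  rw [Measure.map_apply hι hrange.compl]
  simp [ι]
end

section
/- Let (X,μ,T) be a probability-measure-preserving system and d a metric on X such that the set Y = {(x,y) ∈ X×X : ∃ n ≥ 0, d(Tⁿx,Tⁿy) > δ} is μ⊗μ-measurable. If T is pairwise sensitive with constant δ (Y has full product measure), then for every x ∈ X the set S_x = {y : ∀ n ≥ 0, d(Tⁿx,Tⁿy) ≤ δ/2} has μ-measure zero. -/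
/-!
Two points that both shadow the orbit of `x` within `δ / 2` shadow each other within `δ`, so
`S_x ×ˢ S_x` lies in the complement of `Y` and is `μ.prod μ`-null. As `μ.prod μ (S ×ˢ S) = μ S ^ 2`
holds for arbitrary (not necessarily measurable) `S`, the slice `S_x` is null.
-/

open MeasureTheory

theorem MeasureTheory.Measure.measure_eq_zero_of_prod_self_eq_zero {α : Type*}
    [MeasurableSpace α] {μ : Measure α} [SFinite μ] {s : Set α}
    (h : μ.prod μ (s ×ˢ s) = 0) : μ s = 0 := by
  rw [Measure.prod_prod] at h
  exact mul_self_eq_zero.mp h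

theorem dist_le_of_forall_dist_le_half {ι X E : Type*} [PseudoMetricSpace E]
    (F : ι → X → E) {x y₁ y₂ : X} {δ : ℝ}
    (h₁ : ∀ i, dist (F i x) (F i y₁) ≤ δ / 2) (h₂ : ∀ i, dist (F i x) (F i y₂) ≤ δ / 2)
    (i : ι) : dist (F i y₁) (F i y₂) ≤ δ :=
  calc dist (F i y₁) (F i y₂) ≤ dist (F i x) (F i y₁) + dist (F i x) (F i y₂) :=
        dist_triangle_left _ _ _
    _ ≤ δ / 2 + δ / 2 := add_le_add (h₁ i) (h₂ i)
    _ = δ := add_halves δ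

theorem prod_self_subset_compl_separated {ι X E : Type*} [PseudoMetricSpace E]
    (F : ι → X → E) (x : X) (δ : ℝ) :
    {y | ∀ i, dist (F i x) (F i y) ≤ δ / 2} ×ˢ {y | ∀ i, dist (F i x) (F i y) ≤ δ / 2} ⊆
      {p : X × X | ∃ i, δ < dist (F i p.1) (F i p.2)}ᶜ := by
  rintro ⟨y₁, y₂⟩ ⟨h₁, h₂⟩ ⟨i, hi⟩
  exact (dist_le_of_forall_dist_le_half F h₁ h₂ i).not_gt hi

theorem pairwise_sensitive_implies_slices_null_general {X : Type*} [MetricSpace X]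
    [MeasurableSpace X]
    (μ : Measure X) [IsProbabilityMeasure μ] (T : X → X)
    (δ : ℝ)
    (hfull : (μ.prod μ) {p : X × X | ∃ n : ℕ, δ < dist (T^[n] p.1) (T^[n] p.2)}ᶜ = 0) :
    ∀ x : X, μ {y : X | ∀ n : ℕ, dist (T^[n] x) (T^[n] y) ≤ δ / 2} = 0 := fun x =>
  Measure.measure_eq_zero_of_prod_self_eq_zero <|
    measure_mono_null (prod_self_subset_compl_separated (fun n => T^[n]) x δ) hfull

/-- If `T` is pairwise sensitive with constant `δ` (the set
`Y = {(x,y) | ∃ n, d(Tⁿx,Tⁿy) > δ}` has full `μ⊗μ`-measure), then for every `x` the set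
`S_x = {y | ∀ n, d(Tⁿx,Tⁿy) ≤ δ/2}` is `μ`-null. -/
theorem pairwise_sensitive_implies_slices_null {X : Type*} [MetricSpace X]
    [MeasurableSpace X]
    (μ : Measure X) [IsProbabilityMeasure μ] [μ.IsComplete] (T : X → X)
    (hT : MeasurePreserving T μ μ) (δ : ℝ) (hδ : 0 < δ)
    (hY : MeasurableSet {p : X × X | ∃ n : ℕ, δ < dist (T^[n] p.1) (T^[n] p.2)})
    (hfull : (μ.prod μ) {p : X × X | ∃ n : ℕ, δ < dist (T^[n] p.1) (T^[n] p.2)}ᶜ = 0) :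
    ∀ x : X, μ {y : X | ∀ n : ℕ, dist (T^[n] x) (T^[n] y) ≤ δ / 2} = 0 :=
  pairwise_sensitive_implies_slices_null_general μ T δ hfull
end

section
/- Let T be the doubling map Tx = 2x mod 1 on the unit interval I with Lebesgue measure λ and the standard metric d. Then the metric d_T(x,y) = min(sup_{n≥0} d(Tⁿx,Tⁿy), 1) is not λ-compatible: for every 0 < δ < 1, the d_T-ball of radius δ around 0 has Lebesgue measure zero. -/
/-!
Under the quotient map `[0,1) → ℝ/ℤ` the doubling map becomes `y ↦ 2 • y`, hence it is ergodic
for Lebesgue measure. Since `0` is fixed, every point of the `d_T`-ball of radius `δ < 1` about `0`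
keeps its whole orbit in `[0, δ]`. The set of points whose orbit never leaves a given set is
forward invariant, so for an ergodic map it is null as soon as the complement of that set has
positive measure.
-/

open MeasureTheory

/-- The doubling map `x ↦ 2x (mod 1)` on the unit interval `[0,1)`. -/
noncomputable def doubling : (Set.Ico (0:ℝ) 1) → (Set.Ico (0:ℝ) 1) := fun x =>
  ⟨Int.fract (2 * x.1), Set.mem_Ico.mpr ⟨Int.fract_nonneg _, Int.fract_lt_one _⟩⟩

open Set Function

theorem dist_iterate_lt_of_dT_lt {X : Type*} [PseudoMetricSpace X] {T : X → X} {x y : X}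
    {δ : ℝ} (hδ : δ ≤ 1) (h : dT T x y < δ) (n : ℕ) : dist (T^[n] x) (T^[n] y) < δ := by
  have hmin : min (⨆ n : ℕ, edist (T^[n] x) (T^[n] y)) 1 < ENNReal.ofReal δ :=
    (ENNReal.lt_ofReal_iff_toReal_lt (min_lt_of_right_lt ENNReal.one_lt_top).ne).2 h
  have hsup : (⨆ n : ℕ, edist (T^[n] x) (T^[n] y)) < ENNReal.ofReal δ := by
    refine (min_lt_iff.1 hmin).resolve_right (not_lt.2 ?_)
    simpa using ENNReal.ofReal_le_ofReal hδ
  exact edist_lt_ofReal.1 ((le_iSup _ n).trans_lt hsup)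

theorem Ergodic.measure_setOf_forall_iterate_mem_eq_zero {α : Type*} [MeasurableSpace α]
    {μ : Measure α} [IsFiniteMeasure μ] {f : α → α} (hf : Ergodic f μ) {s : Set α}
    (hs : NullMeasurableSet s μ) (hsc : μ sᶜ ≠ 0) : μ {x | ∀ n, f^[n] x ∈ s} = 0 := by
  set S := {x | ∀ n, f^[n] x ∈ s}
  have hS : NullMeasurableSet S μ := by
    rw [show S = ⋂ n, f^[n] ⁻¹' s by ext; simp [S]]
    exact .iInter fun n => hs.preimage (hf.quasiMeasurePreserving.iterate n)
  have hinv : S ⊆ f ⁻¹' S := fun x hx n => by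
    simpa only [mem_preimage, ← iterate_succ_apply] using hx (n + 1)
  rcases hf.ae_empty_or_univ_of_ae_le_preimage hS (.of_forall hinv) with h | h
  · exact measure_congr h |>.trans measure_empty
  · have hSs : S ⊆ s := fun x hx => hx 0
    exact absurd (measure_mono_null (compl_subset_compl.2 hSs) (ae_eq_univ.1 h)) hsc

/-- `AddCircle.measurableEquivIco T 0` lands in `Ico 0 (0 + T)`, which is not definitionally
`Ico 0 T`. -/
noncomputable def AddCircle.measurableEquivIcoZero (T : ℝ) [Fact (0 < T)] :
    Ico (0:ℝ) T ≃ᵐ AddCircle T where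
  toFun x := x
  invFun y := ⟨equivIco T 0 y, by simpa only [zero_add] using (equivIco T 0 y).2⟩
  left_inv x := Subtype.ext (equivIco_coe_of_mem (by simp))
  right_inv y := coe_equivIco
  measurable_toFun := AddCircle.measurable_mk'.comp measurable_subtype_coe
  measurable_invFun := (measurable_subtype_coe.comp (measurableEquivIco T 0).measurable).subtype_mk

theorem AddCircle.measurePreserving_measurableEquivIcoZero (T : ℝ) [Fact (0 < T)] :
    MeasurePreserving (measurableEquivIcoZero T) (volume.comap Subtype.val) volume := by
  refine ⟨(measurableEquivIcoZero T).measurable, ?_⟩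
  have hmk := zero_add T ▸ AddCircle.measurePreserving_mk T 0
  rw [← hmk.map_eq, ← Measure.restrict_congr_set Ico_ae_eq_Ioc,
    ← map_comap_subtype_coe measurableSet_Ico, Measure.map_map AddCircle.measurable_mk'
    measurable_subtype_coe]
  rfl

theorem semiconj_doubling :
    Semiconj (AddCircle.measurableEquivIcoZero 1) doubling (fun y => 2 • y) := fun x => by
  change ((Int.fract (2 * x.1) : ℝ) : AddCircle (1:ℝ)) = 2 • (x.1 : AddCircle (1:ℝ))
  rw [AddCircle.coe_fract, two_mul, AddCircle.coe_add, two_nsmul]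

theorem ergodic_doubling : Ergodic doubling (volume.comap Subtype.val) := by
  have he := AddCircle.measurePreserving_measurableEquivIcoZero 1
  have hconj : doubling = (AddCircle.measurableEquivIcoZero 1).symm ∘ (fun y => 2 • y) ∘
      AddCircle.measurableEquivIcoZero 1 := by
    ext1 x
    simp [← semiconj_doubling x]
  rw [hconj]
  exact (he.symm _).ergodic_conjugate_iff.mpr (AddCircle.ergodic_nsmul one_lt_two)

instance isFiniteMeasure_comap_val_Ico {a b : ℝ} : IsFiniteMeasure (volume.comap (Subtype.val : Ico a b → ℝ)) :=
  ⟨by rw [comap_subtype_coe_apply measurableSet_Ico, image_univ, Subtype.range_coe]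
      exact measure_Ico_lt_top⟩

/-- For the doubling map `T` on `[0,1)` with Lebesgue measure and the standard metric,
the metric `d_T` is not Lebesgue-compatible: for every `0 < δ < 1`, the `d_T`-ball of
radius `δ` around `0` has Lebesgue measure zero. -/
theorem doubling_dT_not_compatible (δ : ℝ) (h0 : 0 < δ) (h1 : δ < 1) :
    Measure.comap (Subtype.val) volume
      {y : (Set.Ico (0:ℝ) 1) |
        dT doubling ⟨0, Set.mem_Ico.mpr ⟨le_rfl, zero_lt_one⟩⟩ y < δ} = 0 := by
  set o : Ico (0:ℝ) 1 := ⟨0, Set.mem_Ico.mpr ⟨le_rfl, zero_lt_one⟩⟩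
  set s : Set (Ico (0:ℝ) 1) := {z | z.1 ≤ δ}
  have hfix : doubling o = o := Subtype.ext (by simp [doubling, o])
  have hconfined : {y | dT doubling o y < δ} ⊆ {y | ∀ n, doubling^[n] y ∈ s} := fun y hy n => by
    have := dist_iterate_lt_of_dT_lt h1.le hy n
    rw [dist_comm, iterate_fixed hfix, Subtype.dist_eq, Real.dist_eq] at this
    simpa [o, s] using (le_abs_self _).trans this.le
  have hsc : Ioo δ 1 ⊆ Subtype.val '' sᶜ := fun t ht =>
    ⟨⟨t, h0.le.trans ht.1.le, ht.2⟩, not_le.2 ht.1, rfl⟩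
  refine measure_mono_null hconfined (ergodic_doubling.measure_setOf_forall_iterate_mem_eq_zero
    (measurableSet_le measurable_subtype_coe measurable_const).nullMeasurableSet ?_)
  rw [comap_subtype_coe_apply measurableSet_Ico]
  exact fun h => ((Measure.measure_Ioo_pos _).2 h1).ne' (measure_mono_null hsc h)
end
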